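/- Let F : ℝ^d → ℝ be C² with F'' ≥ ρ Id (ρ ≠ 0), and let X : [0,T] → ℝ^d solve Ẍ = F''(X)F'(X) with X(0)=x, X(T)=y. Then ∫₀ᵀ (|Ẋ(t)|² + |F'(X(t))|²) dt + 2(F(y) − F(x)) ≤ ((1 − e^{−2ρT})/(2ρ)) |Ẋ(T) + F'(y)|². -/

import Mathlib

/-!
Along a solution of Newton's equation the vector `V = Ẋ + ∇F(X)` solves the linear equation
`V̇ = ∇²F(X) V`, because `Ẍ = ∇²F(X) ∇F(X)`. Convexity then gives `d/dt ‖V‖² ≥ 2ρ ‖V‖²`, so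
`‖V_t‖² ≤ e^{2ρ(t-T)} ‖V_T‖²`, and integrating over `[0, T]` bounds `∫ ‖V‖²` by the right-hand
side. Finally `‖V‖² = ‖Ẋ‖² + ‖∇F(X)‖² + 2 d/dt F(X)`, which turns `∫ ‖V‖²` into the left-hand side.
-/

open Real Set
open scoped RealInnerProductSpace

theorem integral_exp_mul_sub {c : ℝ} (hc : c ≠ 0) (a b : ℝ) :
    ∫ t in a..b, exp (c * (t - b)) = (1 - exp (c * (a - b))) / c := by
  have hderiv : ∀ t, HasDerivAt (fun s => exp (c * (s - b)) / c) (exp (c * (t - b))) t := fun t =>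
    ((((hasDerivAt_id t).sub_const b).const_mul c).exp.div_const c).congr_deriv (by simp [hc])
  rw [intervalIntegral.integral_eq_sub_of_hasDerivAt (fun t _ => hderiv t)
    ((by fun_prop : Continuous fun t => exp (c * (t - b))).intervalIntegrable _ _)]
  simp only [sub_self, mul_zero, exp_zero]
  ring

theorem le_exp_mul_sub_mul_of_mul_le_deriv {g g' : ℝ → ℝ} {c a b : ℝ}
    (hg : ∀ t ∈ Icc a b, HasDerivAt g (g' t) t) (hg' : ∀ t ∈ Icc a b, c * g t ≤ g' t) :
    ∀ t ∈ Icc a b, g t ≤ exp (c * (t - b)) * g b := by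
  have hmono : MonotoneOn (fun t => exp (-c * t) * g t) (Icc a b) := by
    have hderiv : ∀ t ∈ Icc a b, HasDerivAt (fun t => exp (-c * t) * g t)
        (exp (-c * t) * (g' t - c * g t)) t := fun t ht =>
      ((((hasDerivAt_id t).const_mul (-c)).exp).mul (hg t ht)).congr_deriv
        (by simp only [id]; ring)
    refine monotoneOn_of_hasDerivWithinAt_nonneg (convex_Icc a b)
      (fun t ht => (hderiv t ht).continuousAt.continuousWithinAt)
      (fun t ht => (hderiv t (interior_subset ht)).hasDerivWithinAt) fun t ht => ?_
    exact mul_nonneg (exp_pos _).le (sub_nonneg.2 (hg' t (interior_subset ht)))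
  intro t ht
  have hb : b ∈ Icc a b := right_mem_Icc.2 (ht.1.trans ht.2)
  calc g t = exp (c * t) * (exp (-c * t) * g t) := by
        rw [← mul_assoc, ← exp_add]; ring_nf; simp
    _ ≤ exp (c * t) * (exp (-c * b) * g b) :=
        mul_le_mul_of_nonneg_left (hmono ht hb ht.2) (exp_pos _).le
    _ = exp (c * (t - b)) * g b := by rw [← mul_assoc, ← exp_add]; ring_nf

theorem integral_le_of_mul_le_deriv {g g' : ℝ → ℝ} {c a b : ℝ} (hc : c ≠ 0) (hab : a ≤ b)
    (hg : ∀ t ∈ Icc a b, HasDerivAt g (g' t) t) (hg' : ∀ t ∈ Icc a b, c * g t ≤ g' t) :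
    ∫ t in a..b, g t ≤ (1 - exp (c * (a - b))) / c * g b := by
  have hcont : ContinuousOn g (uIcc a b) := by
    rw [uIcc_of_le hab]
    exact fun t ht => (hg t ht).continuousAt.continuousWithinAt
  calc ∫ t in a..b, g t ≤ ∫ t in a..b, exp (c * (t - b)) * g b :=
        intervalIntegral.integral_mono_on hab hcont.intervalIntegrable
          ((by fun_prop : Continuous fun t => exp (c * (t - b)) * g b).intervalIntegrable _ _)
          (le_exp_mul_sub_mul_of_mul_le_deriv hg hg')
    _ = (1 - exp (c * (a - b))) / c * g b := by
        rw [intervalIntegral.integral_mul_const, integral_exp_mul_sub hc]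

section Gradient

variable {E : Type*} [NormedAddCommGroup E] [InnerProductSpace ℝ E] [CompleteSpace E]
  {F : E → ℝ}

theorem ContDiffAt.gradient {n : WithTop ℕ∞} {z : E} (hF : ContDiffAt ℝ (n + 1) F z) :
    ContDiffAt ℝ n (gradient F) z :=
  (InnerProductSpace.toDual ℝ E).symm.toContinuousLinearEquiv.contDiff.contDiffAt.comp z
    (hF.fderiv_right le_rfl)

theorem ContDiff.gradient {n : WithTop ℕ∞} (hF : ContDiff ℝ (n + 1) F) :
    ContDiff ℝ n (gradient F) :=
  contDiff_iff_contDiffAt.2 fun _ => hF.contDiffAt.gradient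

theorem inner_fderiv_gradient_left (z u v : E) :
    ⟪fderiv ℝ (gradient F) z u, v⟫ = fderiv ℝ (fderiv ℝ F) z u v := by
  have : gradient F = (InnerProductSpace.toDual ℝ E).symm ∘ fderiv ℝ F := rfl
  rw [this, LinearIsometryEquiv.comp_fderiv]
  exact InnerProductSpace.toDual_symm_apply

theorem inner_fderiv_gradient_comm {z : E} (hF : ContDiffAt ℝ 2 F z) (u v : E) :
    ⟪fderiv ℝ (gradient F) z u, v⟫ = ⟪fderiv ℝ (gradient F) z v, u⟫ := by
  rw [inner_fderiv_gradient_left, inner_fderiv_gradient_left]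
  exact hF.isSymmSndFDerivAt (by simp [minSmoothness_of_isRCLikeNormedField]) u v

theorem half_smul_gradient_norm_sq_gradient {z : E} (hF : ContDiffAt ℝ 2 F z) :
    (1 / 2 : ℝ) • gradient (fun w => ‖gradient F w‖ ^ 2) z
      = fderiv ℝ (gradient F) z (gradient F z) := by
  have hG : DifferentiableAt ℝ (gradient F) z :=
    (hF.gradient (n := 1)).differentiableAt one_ne_zero
  refine ext_inner_right ℝ fun v => ?_
  rw [real_inner_smul_left, inner_gradient_left, hG.hasFDerivAt.norm_sq.fderiv]
  simp only [smul_apply, ContinuousLinearMap.comp_apply, coe_innerSL_apply, nsmul_eq_mul,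
    Nat.cast_ofNat]
  rw [real_inner_comm, inner_fderiv_gradient_comm hF]
  ring

theorem hasDerivAt_deriv_add_gradient_of_newton {X : ℝ → E} {t : ℝ}
    (hF : ContDiffAt ℝ 2 F (X t)) (hX : DifferentiableAt ℝ X t)
    (hX' : DifferentiableAt ℝ (deriv X) t)
    (hNewton : deriv (deriv X) t = (1 / 2 : ℝ) • gradient (fun z => ‖gradient F z‖ ^ 2) (X t)) :
    HasDerivAt (fun s => deriv X s + gradient F (X s))
      (fderiv ℝ (gradient F) (X t) (deriv X t + gradient F (X t))) t := by
  have hG : DifferentiableAt ℝ (gradient F) (X t) :=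
    (hF.gradient (n := 1)).differentiableAt one_ne_zero
  have h := hX'.hasDerivAt.add (hG.hasFDerivAt.comp_hasDerivAt t hX.hasDerivAt)
  rw [hNewton, half_smul_gradient_norm_sq_gradient hF] at h
  rw [map_add, add_comm]
  exact h

theorem integral_norm_deriv_add_gradient_sq {X : ℝ → E} (hF : ContDiff ℝ 1 F)
    (hX : ContDiff ℝ 1 X) (a b : ℝ) :
    ∫ t in a..b, ‖deriv X t + gradient F (X t)‖ ^ 2
      = (∫ t in a..b, (‖deriv X t‖ ^ 2 + ‖gradient F (X t)‖ ^ 2)) + 2 * (F (X b) - F (X a)) := by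
  have hX' : Continuous (deriv X) := hX.continuous_deriv le_rfl
  have hG : Continuous (gradient F) := (hF.gradient (n := 0)).continuous
  have hFX : ∀ t, HasDerivAt (fun s => F (X s)) ⟪gradient F (X t), deriv X t⟫ t := fun t => by
    rw [inner_gradient_left]
    exact ((hF.differentiable one_ne_zero) (X t)).hasFDerivAt.comp_hasDerivAt t
      ((hX.differentiable one_ne_zero) t).hasDerivAt
  have hFTC : ∫ t in a..b, ⟪gradient F (X t), deriv X t⟫ = F (X b) - F (X a) :=
    intervalIntegral.integral_eq_sub_of_hasDerivAt (fun t _ => hFX t)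
      ((by fun_prop : Continuous fun t => ⟪gradient F (X t), deriv X t⟫).intervalIntegrable _ _)
  have hexpand : ∀ t, ‖deriv X t + gradient F (X t)‖ ^ 2
      = (‖deriv X t‖ ^ 2 + ‖gradient F (X t)‖ ^ 2) + 2 * ⟪gradient F (X t), deriv X t⟫ :=
    fun t => by rw [norm_add_sq_real, real_inner_comm]; ring
  simp_rw [hexpand]
  rw [intervalIntegral.integral_add, intervalIntegral.integral_const_mul, hFTC]
  all_goals exact Continuous.intervalIntegrable (by fun_prop) _ _

end Gradient

theorem stmt_10 (d : ℕ) (T ρ : ℝ) (hT : 0 < T) (hρ : ρ ≠ 0)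
    (F : EuclideanSpace ℝ (Fin d) → ℝ) (hF : ContDiff ℝ 2 F)
    (hconv : ∀ x v : EuclideanSpace ℝ (Fin d),
      ρ * ‖v‖ ^ 2 ≤ ⟪fderiv ℝ (gradient F) x v, v⟫)
    (X : ℝ → EuclideanSpace ℝ (Fin d)) (hX : ContDiff ℝ 2 X)
    (x y : EuclideanSpace ℝ (Fin d)) (hx : X 0 = x) (hy : X T = y)
    (hNewton : ∀ t ∈ Icc (0:ℝ) T,
      deriv (deriv X) t = (1/2 : ℝ) • gradient (fun z => ‖gradient F z‖ ^ 2) (X t)) :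
    (∫ t in (0:ℝ)..T, (‖deriv X t‖ ^ 2 + ‖gradient F (X t)‖ ^ 2)) + 2 * (F y - F x)
      ≤ ((1 - Real.exp (-2 * ρ * T)) / (2 * ρ)) * ‖deriv X T + gradient F y‖ ^ 2 := by
  have hX' : Differentiable ℝ (deriv X) := (hX.deriv' (n := 1)).differentiable one_ne_zero
  have hV : ∀ t ∈ Icc 0 T, HasDerivAt (fun s => deriv X s + gradient F (X s))
      (fderiv ℝ (gradient F) (X t) (deriv X t + gradient F (X t))) t := fun t ht =>
    hasDerivAt_deriv_add_gradient_of_newton hF.contDiffAt (hX.differentiable two_ne_zero t)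
      (hX' t) (hNewton t ht)
  have hbound := integral_le_of_mul_le_deriv (mul_ne_zero two_ne_zero hρ) hT.le
    (fun t ht => (hV t ht).norm_sq) fun t _ => by
      rw [real_inner_comm, mul_assoc]
      exact mul_le_mul_of_nonneg_left (hconv _ _) zero_le_two
  rw [integral_norm_deriv_add_gradient_sq (hF.of_le one_le_two) (hX.of_le one_le_two), hx, hy,
    show 2 * ρ * (0 - T) = -2 * ρ * T by ring] at hbound
  exact hbound
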